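/- (Chung's trace inequality) Let A₁, …, Aₙ and B₁, …, Bₙ be real symmetric N×N matrices such that A₁ ≥ A₂ ≥ ⋯ ≥ Aₙ ≥ 0 in the Loewner order and ∑_{k=1}^{j} A_k ≤ ∑_{k=1}^{j} B_k in the Loewner order for every j ∈ {1, 2, …, n}. Then ∑_{k=1}^{n} Trace(A_k²) ≤ ∑_{k=1}^{n} Trace(B_k²). -/

import Mathlib

/-! With `C k = B k - A k` one has `Tr (B k)² = Tr (A k)² + 2 Tr (A k * C k) + Tr (C k)²`, and
`Tr (C k)² ≥ 0` because `C k` is symmetric. Abel summation writes `∑ Tr (A k * C k)` as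
`∑_{k<n} Tr ((A k - A (k+1)) * S k) + Tr (A n * S n)` with partial sums `S j = ∑_{k ≤ j} C k ⪰ 0`,
and the trace of a product of two positive semidefinite matrices is nonnegative. -/

open Finset
open scoped ComplexOrder

namespace Matrix

variable {m 𝕜 : Type*} [Fintype m] [RCLike 𝕜]

open scoped MatrixOrder in
theorem PosSemidef.trace_mul_nonneg {P Q : Matrix m m 𝕜} (hP : P.PosSemidef)
    (hQ : Q.PosSemidef) : 0 ≤ (P * Q).trace := by
  classical
  obtain ⟨X, rfl⟩ := CStarAlgebra.nonneg_iff_eq_star_mul_self.mp hQ.nonneg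
  rw [← mul_assoc, trace_mul_comm, ← mul_assoc, star_eq_conjTranspose]
  exact (hP.mul_mul_conjTranspose_same X).trace_nonneg

theorem IsHermitian.trace_mul_self_nonneg {C : Matrix m m 𝕜} (hC : C.IsHermitian) :
    0 ≤ (C * C).trace := by
  simpa [hC.eq] using (posSemidef_conjTranspose_mul_self C).trace_nonneg

theorem trace_add_mul_self {R : Type*} [CommRing R] (A C : Matrix m m R) :
    ((A + C) * (A + C)).trace = (A * A).trace + 2 * (A * C).trace + (C * C).trace := by
  rw [add_mul, mul_add, mul_add, trace_add, trace_add, trace_add, trace_mul_comm C A]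
  ring

theorem sum_Icc_trace_mul_nonneg {n : ℕ} {A C : ℕ → Matrix m m 𝕜}
    (hA_anti : ∀ k, 1 ≤ k → k < n → (A k - A (k + 1)).PosSemidef) (hA_pos : (A n).PosSemidef)
    (hC : ∀ j, 1 ≤ j → j ≤ n → (∑ k ∈ Icc 1 j, C k).PosSemidef) :
    0 ≤ ∑ k ∈ Icc 1 n, (A k * C k).trace := by
  induction n generalizing A with
  | zero => simp
  | succ n ih =>
    obtain rfl | hn := Nat.eq_zero_or_pos n
    · simpa using hA_pos.trace_mul_nonneg (by simpa using hC 1 le_rfl le_rfl)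
    have abel : ∑ k ∈ Icc 1 (n + 1), (A k * C k).trace =
        ∑ k ∈ Icc 1 n, ((A k - A (n + 1)) * C k).trace +
          (A (n + 1) * ∑ k ∈ Icc 1 (n + 1), C k).trace := by
      simp only [sum_Icc_succ_top (Nat.le_add_left 1 n), mul_add, trace_add, mul_sum, trace_sum,
        sub_mul, trace_sub, sum_sub_distrib]
      ring
    rw [abel]
    refine add_nonneg (ih (fun k hk hkn => ?_) ?_ fun j hj hjn => hC j hj (by omega))
      (hA_pos.trace_mul_nonneg (hC (n + 1) (by omega) le_rfl))
    · simpa using hA_anti k hk (by omega)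
    · simpa using hA_anti n hn n.lt_succ_self

theorem sum_trace_mul_self_le_of_sum_trace_mul_sub_nonneg {ι : Type*} {s : Finset ι}
    {A B : ι → Matrix m m 𝕜} (hBA : ∀ k ∈ s, (B k - A k).IsHermitian)
    (h : 0 ≤ ∑ k ∈ s, (A k * (B k - A k)).trace) :
    ∑ k ∈ s, (A k * A k).trace ≤ ∑ k ∈ s, (B k * B k).trace := by
  have expand : ∀ k, (B k * B k).trace = (A k * A k).trace + 2 * (A k * (B k - A k)).trace +
      ((B k - A k) * (B k - A k)).trace := fun k => by
    rw [← trace_add_mul_self, add_sub_cancel]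
  simp only [expand, sum_add_distrib, ← mul_sum, add_assoc]
  exact le_add_of_nonneg_right (add_nonneg (mul_nonneg zero_le_two h)
    (sum_nonneg fun k hk => (hBA k hk).trace_mul_self_nonneg))

end Matrix

theorem abel_partial_summation_stmt18_general
    (N : ℕ) (n : ℕ)
    (A B : ℕ → Matrix (Fin N) (Fin N) ℝ)
    (hA_symm : ∀ k, (A k).IsSymm) (hB_symm : ∀ k, (B k).IsSymm)
    (hA_anti : ∀ k, 1 ≤ k → k < n → (A k - A (k + 1)).PosSemidef)
    (hA_pos : (A n).PosSemidef)
    (hAB : ∀ j, 1 ≤ j → j ≤ n →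
      (∑ k ∈ Finset.Icc 1 j, B k - ∑ k ∈ Finset.Icc 1 j, A k).PosSemidef) :
    ∑ k ∈ Finset.Icc 1 n, (A k * A k).trace ≤
      ∑ k ∈ Finset.Icc 1 n, (B k * B k).trace := by
  refine Matrix.sum_trace_mul_self_le_of_sum_trace_mul_sub_nonneg
    (fun k _ => Matrix.isHermitian_iff_isSymm.mpr ((hB_symm k).sub (hA_symm k))) ?_
  refine Matrix.sum_Icc_trace_mul_nonneg hA_anti hA_pos fun j hj hjn => ?_
  simpa only [sum_sub_distrib] using hAB j hj hjn

/-- Chung's trace inequality: if `A₁ ≥ ⋯ ≥ Aₙ ≥ 0` in the Loewner order on real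
symmetric matrices and `∑_{k=1}^j A_k ≤ ∑_{k=1}^j B_k` for all `j`, then
`∑ Trace(A_k²) ≤ ∑ Trace(B_k²)`. -/
theorem abel_partial_summation_stmt18
    (N : ℕ) (n : ℕ) (hn : 1 ≤ n)
    (A B : ℕ → Matrix (Fin N) (Fin N) ℝ)
    (hA_symm : ∀ k, (A k).IsSymm) (hB_symm : ∀ k, (B k).IsSymm)
    (hA_anti : ∀ k, 1 ≤ k → k < n → (A k - A (k + 1)).PosSemidef)
    (hA_pos : (A n).PosSemidef)
    (hAB : ∀ j, 1 ≤ j → j ≤ n →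
      (∑ k ∈ Finset.Icc 1 j, B k - ∑ k ∈ Finset.Icc 1 j, A k).PosSemidef) :
    ∑ k ∈ Finset.Icc 1 n, (A k * A k).trace ≤
      ∑ k ∈ Finset.Icc 1 n, (B k * B k).trace :=
  abel_partial_summation_stmt18_general N n A B hA_symm hB_symm hA_anti hA_pos hAB
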